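/- arXiv:2311.11804 — 2 statements merged into one kernel-verified Lean document; each statement's English description precedes it below -/
import Mathlib

section
/- (Lemma 1, sufficiency.) Let M₁,…,M_L (L ≥ 2) be distinct nonsingular D×D integer matrices, let M_{1i} be a gcld of M₁ and M_i for 2 ≤ i ≤ L, and let R be an lcrm of M₁,…,M_L. Let m ∈ ℤ^D have folding vectors n_i = ⌊M_i⁻¹m⌋ and remainders r_i = m − M_i n_i, and suppose ⌊M₁⁻¹m⌋ ∈ N(M₁⁻¹R) (equivalently M₁n₁ ∈ N(R)). Let erroneous remainders r̃_i = r_i + Δr_i satisfy ‖Δr_i‖₂ ≤ τ for 1 ≤ i ≤ L, where τ < min_{2≤i≤L} λ(M_{1i})/4. Then: (a) for each 2 ≤ i ≤ L, r_i − r₁ is the unique minimizer of ‖v − (r̃_i − r̃₁)‖₂ over v ∈ L(M_{1i}); (b) M₁n₁ is the unique vector z ∈ N(R) satisfying z ∈ L(M₁) and z − (r_i − r₁) ∈ L(M_i) for all 2 ≤ i ≤ L, and M_i n_i = M₁n₁ − (r_i − r₁) for 2 ≤ i ≤ L; (c) the reconstruction m̃ = (1/L)∑_{i=1}^L (M_i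 n_i + r̃_i) satisfies ‖m̃ − m‖₂ ≤ τ. -/
open Matrix

noncomputable section

/-- Real cast of an integer matrix. -/
def rmat {D : ℕ} (A : Matrix (Fin D) (Fin D) ℤ) : Matrix (Fin D) (Fin D) ℝ :=
  A.map Int.cast

/-- Real cast of an integer vector, viewed in Euclidean space. -/
def rvec {D : ℕ} (v : Fin D → ℤ) : EuclideanSpace ℝ (Fin D) :=
  WithLp.toLp 2 fun i => (v i : ℝ)

/-- The lattice generated by a real matrix. -/
def latt {D : ℕ} (A : Matrix (Fin D) (Fin D) ℝ) : Set (EuclideanSpace ℝ (Fin D)) :=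
  {v | ∃ n : Fin D → ℤ, v = A.mulVec fun i => (n i : ℝ)}

/-- Minimum (Euclidean) distance of the lattice generated by a real matrix. -/
def lamMin {D : ℕ} (A : Matrix (Fin D) (Fin D) ℝ) : ℝ :=
  sInf {r | ∃ v ∈ latt A, v ≠ 0 ∧ ‖v‖ = r}

/-- The set of integer vectors of the lattice generated by an integer matrix. -/
def lattZ {D : ℕ} (A : Matrix (Fin D) (Fin D) ℤ) : Set (Fin D → ℤ) :=
  {v | ∃ n : Fin D → ℤ, v = A.mulVec n}

/-- N(A): the integer points in the fundamental parallelepiped of a real matrix A. -/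
def NN {D : ℕ} (A : Matrix (Fin D) (Fin D) ℝ) : Set (Fin D → ℤ) :=
  {k | ∃ x : Fin D → ℝ, (∀ i, 0 ≤ x i ∧ x i < 1) ∧ (fun i => (k i : ℝ)) = A.mulVec x}

/-- A is a left divisor of B (i.e. A⁻¹B is an integer matrix). -/
def LeftDvd {D : ℕ} (A B : Matrix (Fin D) (Fin D) ℤ) : Prop :=
  ∃ C : Matrix (Fin D) (Fin D) ℤ, B = A * C

/-- G is a greatest common left divisor of A and B. -/
def IsGcld {D : ℕ} (G A B : Matrix (Fin D) (Fin D) ℤ) : Prop :=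
  G.det ≠ 0 ∧ LeftDvd G A ∧ LeftDvd G B ∧
    ∀ C : Matrix (Fin D) (Fin D) ℤ, C.det ≠ 0 → LeftDvd C A → LeftDvd C B → LeftDvd C G

/-- R is a (nonsingular) right multiple of B. -/
def RightMulOf {D : ℕ} (R B : Matrix (Fin D) (Fin D) ℤ) : Prop :=
  ∃ P : Matrix (Fin D) (Fin D) ℤ, P.det ≠ 0 ∧ R = B * P

/-- R is a least common right multiple of the family M. -/
def IsLcrm {D : ℕ} {ι : Type*} (R : Matrix (Fin D) (Fin D) ℤ)
    (M : ι → Matrix (Fin D) (Fin D) ℤ) : Prop :=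
  R.det ≠ 0 ∧ (∀ i, RightMulOf R (M i)) ∧
    ∀ R' : Matrix (Fin D) (Fin D) ℤ, R'.det ≠ 0 → (∀ i, RightMulOf R' (M i)) →
      RightMulOf R' R

/-- Folding vector ⌊A⁻¹ m⌋ (element-wise floor). -/
def fold {D : ℕ} (A : Matrix (Fin D) (Fin D) ℤ) (m : Fin D → ℤ) : Fin D → ℤ :=
  fun i => ⌊((rmat A)⁻¹.mulVec fun j => (m j : ℝ)) i⌋

/- ======================= auxiliary lemmas ======================= -/

lemma rvec_mulVec {D : ℕ} (A : Matrix (Fin D) (Fin D) ℤ) (v : Fin D → ℤ) :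
    rvec (A.mulVec v) = (rmat A).mulVec (fun i => ((v i : ℝ))) := by
  funext i
  simp [rvec, rmat, mulVec, dotProduct]

lemma rvec_sub' {D : ℕ} (u v : Fin D → ℤ) : rvec (u - v) = rvec u - rvec v := by
  ext i; simp [rvec]

lemma rvec_add' {D : ℕ} (u v : Fin D → ℤ) : rvec (u + v) = rvec u + rvec v := by
  ext i; simp [rvec]

lemma rmat_det {D : ℕ} (A : Matrix (Fin D) (Fin D) ℤ) : (rmat A).det = (A.det : ℝ) := by
  rw [rmat, show (Int.cast : ℤ → ℝ) = (Int.castRingHom ℝ) from rfl]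
  exact ((Int.castRingHom ℝ).map_det A).symm

lemma mul_updateCol' {D : ℕ} (M T : Matrix (Fin D) (Fin D) ℤ)
    (j0 : Fin D) (c : Fin D → ℤ) :
    M * (T.updateCol j0 c) = (M * T).updateCol j0 (M.mulVec c) := by
  funext i j
  by_cases h : j = j0 <;>
    simp [h, Matrix.mul_apply, Matrix.updateCol_apply, Matrix.mulVec, dotProduct]

lemma crm_vec {D : ℕ} {ι : Type*} (hD : 0 < D) (R : Matrix (Fin D) (Fin D) ℤ)
    (M : ι → Matrix (Fin D) (Fin D) ℤ) (hR : IsLcrm R M)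
    (w : Fin D → ℤ) (hw : ∀ i, ∃ s, w = (M i).mulVec s) :
    ∃ y, w = R.mulVec y := by
  obtain ⟨hd, hcrm, hmin⟩ := hR
  set d := R.det with hdd
  have hT : ∀ i, ∃ T : Matrix (Fin D) (Fin D) ℤ, (M i) * T = d • 1 := by
    intro i
    obtain ⟨P, hP, hRP⟩ := hcrm i
    refine ⟨P.det • (M i).adjugate, ?_⟩
    rw [Matrix.mul_smul, Matrix.mul_adjugate, smul_smul, hdd, hRP, det_mul, mul_comm]
  choose T hTe using hT
  set j0 : Fin D := ⟨0, hD⟩ with hj0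
  obtain ⟨k, hk, hkd⟩ : ∃ k : ℤ, k ≠ 0 ∧ k * d + w j0 ≠ 0 := by
    by_cases h : d + w j0 = 0
    · exact ⟨2, by norm_num, by intro h2; omega⟩
    · exact ⟨1, one_ne_zero, by rwa [one_mul]⟩
  set d' : ℤ := k * d with hd'd
  have hd' : d' ≠ 0 := mul_ne_zero hk hd
  have hdw : w j0 + d' ≠ 0 := by rw [add_comm]; exact hkd
  have hTe' : ∀ i, (M i) * (k • T i) = d' • 1 := by
    intro i
    rw [Matrix.mul_smul, hTe, smul_smul, hd'd]
  set c : Fin D → ℤ := w + d' • Pi.single j0 1 with hc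
  set A : Matrix (Fin D) (Fin D) ℤ := (d' • (1 : Matrix (Fin D) (Fin D) ℤ)).updateCol j0 c
    with hA
  have hdetA : A.det = d' ^ (D - 1) * (w j0 + d') := by
    rw [hA, ← cramer_apply, cramer_eq_adjugate_mulVec, adjugate_smul, adjugate_one]
    rw [smul_mulVec, one_mulVec]
    simp [hc, Fintype.card_fin, Pi.smul_apply]
  have hdetA0 : A.det ≠ 0 := by
    rw [hdetA]; exact mul_ne_zero (pow_ne_zero _ hd') hdw
  have hcrmA : ∀ i, RightMulOf A (M i) := by
    intro i
    obtain ⟨s, hs⟩ := hw i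
    have hMc : (M i).mulVec (s + (k • T i).mulVec (Pi.single j0 1)) = c := by
      rw [Matrix.mulVec_add, ← hs, Matrix.mulVec_mulVec, hTe', hc]
      congr 1
      rw [smul_mulVec, one_mulVec]
    have hfac : A = (M i) * ((k • T i).updateCol j0 (s + (k • T i).mulVec (Pi.single j0 1))) := by
      rw [mul_updateCol', hTe', hMc, hA]
    refine ⟨_, ?_, hfac⟩
    intro h0
    exact hdetA0 (by rw [hfac, det_mul, h0, mul_zero])
  have hcrmdI : ∀ i, RightMulOf (d' • (1 : Matrix (Fin D) (Fin D) ℤ)) (M i) := by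
    intro i
    refine ⟨k • T i, ?_, (hTe' i).symm⟩
    intro h0
    have h1 : (d' • (1 : Matrix (Fin D) (Fin D) ℤ)).det = 0 := by
      rw [← hTe' i, det_mul, h0, mul_zero]
    rw [det_smul, det_one, mul_one] at h1
    exact pow_ne_zero _ hd' h1
  obtain ⟨QA, _, hQA⟩ := hmin A hdetA0 hcrmA
  obtain ⟨Q0, _, hQ0⟩ := hmin (d' • 1)
    (by rw [det_smul, det_one, mul_one]; exact pow_ne_zero _ hd') hcrmdI
  refine ⟨QA.mulVec (Pi.single j0 1) - Q0.mulVec (Pi.single j0 1), ?_⟩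
  have h1 : A.mulVec (Pi.single j0 1) = c := by
    rw [hA, mulVec_single]
    funext i
    simp [Matrix.updateCol_self]
  have h2 : (d' • (1 : Matrix (Fin D) (Fin D) ℤ)).mulVec (Pi.single j0 1)
      = d' • Pi.single j0 1 := by
    rw [smul_mulVec, one_mulVec]
  have h3 : w = A.mulVec (Pi.single j0 1)
      - (d' • (1 : Matrix (Fin D) (Fin D) ℤ)).mulVec (Pi.single j0 1) := by
    rw [h1, h2, hc]; ring
  rw [h3, hQA, hQ0, ← Matrix.mulVec_mulVec, ← Matrix.mulVec_mulVec, ← Matrix.mulVec_sub]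

/-- Lemma 1, sufficiency: robust MD-CRT with the first modulus as
reference.  Index 0 plays the role of index 1 in the paper. -/
theorem robust_mdcrt_sufficiency {D L : ℕ} [NeZero L] (hD : 0 < D) (hL : 2 ≤ L)
    (M : Fin L → Matrix (Fin D) (Fin D) ℤ)
    (hdet : ∀ i, (M i).det ≠ 0)
    (hdistinct : ∀ i j, i ≠ j → M i ≠ M j)
    (G : Fin L → Matrix (Fin D) (Fin D) ℤ)
    (hG : ∀ i, i ≠ 0 → IsGcld (G i) (M 0) (M i))
    (R : Matrix (Fin D) (Fin D) ℤ) (hR : IsLcrm R M)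
    (m : Fin D → ℤ)
    (n : Fin L → Fin D → ℤ) (hn : ∀ i, n i = fold (M i) m)
    (r : Fin L → Fin D → ℤ) (hr : ∀ i, r i = m - (M i).mulVec (n i))
    (hrange : fold (M 0) m ∈ NN ((rmat (M 0))⁻¹ * rmat R))
    (Δr rt : Fin L → Fin D → ℤ) (hrt : ∀ i, rt i = r i + Δr i)
    (τ : ℝ) (hτ : ∀ i, ‖rvec (Δr i)‖ ≤ τ)
    (hbound : ∀ i, i ≠ 0 → τ < lamMin (rmat (G i)) / 4) :
    -- (a) r_i − r₁ is the unique minimizer of ‖v − (r̃_i − r̃₁)‖₂ over v ∈ L(M_{1i})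
    (∀ i, i ≠ 0 → rvec (r i - r 0) ∈ latt (rmat (G i)) ∧
      ∀ v ∈ latt (rmat (G i)), v ≠ rvec (r i - r 0) →
        ‖rvec (r i - r 0) - (rvec (rt i) - rvec (rt 0))‖ <
          ‖v - (rvec (rt i) - rvec (rt 0))‖) ∧
    -- (b) M₁n₁ is the unique z ∈ N(R) with z ∈ L(M₁) and z − (r_i − r₁) ∈ L(M_i),
    --     and M_i n_i = M₁n₁ − (r_i − r₁)
    ((M 0).mulVec (n 0) ∈ NN (rmat R) ∧ (M 0).mulVec (n 0) ∈ lattZ (M 0) ∧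
      (∀ i, i ≠ 0 → (M 0).mulVec (n 0) - (r i - r 0) ∈ lattZ (M i)) ∧
      (∀ z : Fin D → ℤ, z ∈ NN (rmat R) → z ∈ lattZ (M 0) →
        (∀ i, i ≠ 0 → z - (r i - r 0) ∈ lattZ (M i)) → z = (M 0).mulVec (n 0)) ∧
      (∀ i, i ≠ 0 → (M i).mulVec (n i) = (M 0).mulVec (n 0) - (r i - r 0))) ∧
    -- (c) the reconstruction m̃ = (1/L) ∑ᵢ (M_i n_i + r̃_i) satisfies ‖m̃ − m‖₂ ≤ τ
    ‖(L : ℝ)⁻¹ • (∑ i, rvec ((M i).mulVec (n i) + rt i)) - rvec m‖ ≤ τ := by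
  have hτ0 : 0 ≤ τ := le_trans (norm_nonneg _) (hτ 0)
  have hkey : ∀ i, r i - r 0 = (M 0).mulVec (n 0) - (M i).mulVec (n i) := by
    intro i; rw [hr i, hr 0]; ring
  -- NN membership of M 0 *ᵥ n 0
  obtain ⟨x0, hx0b, hx0e⟩ := hrange
  have hdet0R : IsUnit (rmat (M 0)).det := by
    rw [rmat_det]
    exact isUnit_iff_ne_zero.mpr (by exact_mod_cast hdet 0)
  have hb1e : rvec ((M 0).mulVec (n 0)) = (rmat R).mulVec x0 := by
    have h1 : (fun i => ((n 0 i : ℝ))) = ((rmat (M 0))⁻¹ * rmat R).mulVec x0 := by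
      rw [hn 0]; exact hx0e
    rw [rvec_mulVec, h1, Matrix.mulVec_mulVec, ← Matrix.mul_assoc,
      Matrix.mul_nonsing_inv _ hdet0R, Matrix.one_mul]
  refine ⟨?_, ⟨⟨x0, hx0b, hb1e⟩, ⟨n 0, rfl⟩, ?_, ?_, ?_⟩, ?_⟩
  -- part (a)
  · intro i hi
    obtain ⟨_, ⟨C0, hC0⟩, ⟨Ci, hCi⟩, _⟩ := hG i hi
    have hmem : rvec (r i - r 0) ∈ latt (rmat (G i)) := by
      refine ⟨C0.mulVec (n 0) - Ci.mulVec (n i), ?_⟩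
      have h : r i - r 0 = (G i).mulVec (C0.mulVec (n 0) - Ci.mulVec (n i)) := by
        rw [Matrix.mulVec_sub, Matrix.mulVec_mulVec, Matrix.mulVec_mulVec,
          ← hC0, ← hCi, hkey i]
      rw [h, rvec_mulVec]
    refine ⟨hmem, ?_⟩
    intro v hv hne
    obtain ⟨a, ha⟩ := hv
    obtain ⟨b, hb⟩ := hmem
    have hu : v - rvec (r i - r 0)
        = (rmat (G i)).mulVec (fun j => (((a - b) j : ℤ) : ℝ)) := by
      rw [ha, hb]
      funext j
      simp [Matrix.mulVec, dotProduct, mul_sub, sub_mul, Finset.sum_sub_distrib]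
    have hlam : lamMin (rmat (G i)) ≤ ‖v - rvec (r i - r 0)‖ := by
      apply csInf_le
      · refine ⟨0, ?_⟩
        rintro x ⟨u, _, _, hx⟩
        rw [← hx]; exact norm_nonneg u
      · exact ⟨v - rvec (r i - r 0), ⟨_, hu⟩, sub_ne_zero.mpr hne, rfl⟩
    have herr : rvec (r i - r 0) - (rvec (rt i) - rvec (rt 0))
        = rvec (Δr 0) - rvec (Δr i) := by
      rw [hrt i, hrt 0, rvec_sub', rvec_add', rvec_add']
      abel
    have h2τ : ‖rvec (r i - r 0) - (rvec (rt i) - rvec (rt 0))‖ ≤ 2 * τ := by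
      rw [herr]
      have := norm_sub_le (rvec (Δr 0)) (rvec (Δr i))
      have h0 := hτ 0; have hi' := hτ i
      linarith
    have hlam4 : 4 * τ < lamMin (rmat (G i)) := by
      have := hbound i hi; linarith
    have htri : ‖v - rvec (r i - r 0)‖
        ≤ ‖v - (rvec (rt i) - rvec (rt 0))‖
          + ‖rvec (r i - r 0) - (rvec (rt i) - rvec (rt 0))‖ := by
      have h := norm_sub_le (v - (rvec (rt i) - rvec (rt 0)))
        (rvec (r i - r 0) - (rvec (rt i) - rvec (rt 0)))
      rwa [sub_sub_sub_cancel_right] at h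
    linarith
  -- (b) third conjунct
  · intro i hi
    have h : (M 0).mulVec (n 0) - (r i - r 0) = (M i).mulVec (n i) := by
      rw [hkey i]; ring
    rw [h]; exact ⟨n i, rfl⟩
  -- (b) uniqueness
  · intro z hzNN hz0 hzi
    have hwall : ∀ i, ∃ s, z - (M 0).mulVec (n 0) = (M i).mulVec s := by
      intro i
      by_cases hi : i = 0
      · subst hi
        obtain ⟨a, ha⟩ := hz0
        exact ⟨a - n 0, by rw [Matrix.mulVec_sub, ← ha]⟩
      · obtain ⟨b, hb⟩ := hzi i hi
        refine ⟨b - n i, ?_⟩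
        rw [Matrix.mulVec_sub, ← hb, hkey i]
        ring
    obtain ⟨y, hy⟩ := crm_vec hD R M hR (z - (M 0).mulVec (n 0)) hwall
    obtain ⟨x, hxb, hxe⟩ := hzNN
    have hRdetR : IsUnit (rmat R).det := by
      rw [rmat_det]
      exact isUnit_iff_ne_zero.mpr (by exact_mod_cast hR.1)
    have hre : (rmat R).mulVec x = (rmat R).mulVec (x0 + fun j => ((y j : ℤ) : ℝ)) := by
      have hz : rvec z = rvec ((M 0).mulVec (n 0)) + rvec (R.mulVec y) := by
        rw [← rvec_add']
        congr 1
        rw [← hy]; ring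
      have hzx : rvec z = (rmat R).mulVec x := hxe
      replace hz := congrArg WithLp.ofLp hz
      rw [WithLp.ofLp_add] at hz
      rw [hzx, hb1e, rvec_mulVec] at hz
      rw [Matrix.mulVec_add]; exact hz
    have hxx : x = x0 + fun j => ((y j : ℤ) : ℝ) := by
      have h := congrArg ((rmat R)⁻¹.mulVec) hre
      rwa [Matrix.mulVec_mulVec, Matrix.mulVec_mulVec,
        Matrix.nonsing_inv_mul _ hRdetR, Matrix.one_mulVec, Matrix.one_mulVec] at h
    have hy0 : y = 0 := by
      funext j
      have h1 := (hxb j).1; have h2 := (hxb j).2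
      have h3 := (hx0b j).1; have h4 := (hx0b j).2
      have h5 : ((y j : ℤ) : ℝ) = x j - x0 j := by
        have := congrFun hxx j
        simp only [Pi.add_apply] at this
        linarith
      have hlt : (y j : ℤ) < 1 := by
        have : ((y j : ℤ) : ℝ) < 1 := by linarith
        exact_mod_cast this
      have hgt : (-1 : ℤ) < y j := by
        have : (-1 : ℝ) < ((y j : ℤ) : ℝ) := by linarith
        exact_mod_cast this
      show y j = 0
      omega
    have : z - (M 0).mulVec (n 0) = 0 := by
      rw [hy, hy0, Matrix.mulVec_zero]
    exact sub_eq_zero.mp this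
  -- (b) last conjunct
  · intro i hi
    rw [hkey i]; ring
  -- part (c)
  · have hLne : (L : ℝ) ≠ 0 := Nat.cast_ne_zero.mpr (NeZero.ne L)
    have hsum : ∀ i : Fin L, rvec ((M i).mulVec (n i) + rt i) = rvec m + rvec (Δr i) := by
      intro i
      have h : (M i).mulVec (n i) + rt i = m + Δr i := by
        rw [hrt i, hr i]; ring
      rw [h, rvec_add']
    have hS : (∑ i, rvec ((M i).mulVec (n i) + rt i))
        = (L : ℝ) • rvec m + ∑ i, rvec (Δr i) := by
      rw [Finset.sum_congr rfl (fun i _ => hsum i), Finset.sum_add_distrib,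
        Finset.sum_const, Finset.card_univ, Fintype.card_fin,
        ← Nat.cast_smul_eq_nsmul ℝ]
    have hgoal : (L : ℝ)⁻¹ • ((L : ℝ) • rvec m + ∑ i, rvec (Δr i)) - rvec m
        = (L : ℝ)⁻¹ • ∑ i, rvec (Δr i) := by
      rw [smul_add, smul_smul, inv_mul_cancel₀ hLne, one_smul]
      abel
    rw [hS, hgoal, norm_smul]
    have hsb : ‖∑ i, rvec (Δr i)‖ ≤ (L : ℝ) * τ := by
      calc ‖∑ i, rvec (Δr i)‖ ≤ ∑ i, ‖rvec (Δr i)‖ := norm_sum_le _ _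
        _ ≤ ∑ _i : Fin L, τ := Finset.sum_le_sum (fun i _ => hτ i)
        _ = (L : ℝ) * τ := by
            rw [Finset.sum_const, Finset.card_univ, Fintype.card_fin, nsmul_eq_mul]
    have hnn : ‖(L : ℝ)⁻¹‖ = (L : ℝ)⁻¹ := by
      rw [Real.norm_eq_abs, abs_of_nonneg (by positivity)]
    rw [hnn]
    calc (L : ℝ)⁻¹ * ‖∑ i, rvec (Δr i)‖ ≤ (L : ℝ)⁻¹ * ((L : ℝ) * τ) := by
          apply mul_le_mul_of_nonneg_left hsb (by positivity)
      _ = τ := by rw [← mul_assoc, inv_mul_cancel₀ hLne, one_mul]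
end
end

section
/- (Closed-form MD-CRT for pairwise commutative and coprime moduli.) Let M₁,…,M_L be nonsingular D×D integer matrices that are pairwise commutative (M_iM_j = M_jM_i) and pairwise coprime (a gcld of M_i and M_j is unimodular for i ≠ j). For each i, set W_i = M₁⋯M_{i−1}M_{i+1}⋯M_L, and let Ŵ_i and Q_i be D×D integer matrices with W_iŴ_i + M_iQ_i = I. Then for any r₁,…,r_L ∈ ℤ^D, the vector x = ∑_{i=1}^L W_iŴ_i r_i satisfies x − r_i ∈ L(M_i) for every 1 ≤ i ≤ L; that is, x simultaneously solves all L congruences x ≡ r_i (mod M_i). -/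
open Matrix

noncomputable section

/-- closed-form MD-CRT for pairwise commutative and coprime
moduli: x = ∑ᵢ WᵢŴᵢrᵢ solves all L congruences x ≡ rᵢ (mod Mᵢ). -/
theorem closed_form_mdcrt {D L : ℕ} (hD : 0 < D)
    (M : Fin L → Matrix (Fin D) (Fin D) ℤ) (hdet : ∀ i, (M i).det ≠ 0)
    (hcomm : ∀ i j, M i * M j = M j * M i)
    (hcop : ∀ i j, i ≠ j → ∀ Gm : Matrix (Fin D) (Fin D) ℤ,
      IsGcld Gm (M i) (M j) → IsUnit Gm.det)
    (W : Fin L → Matrix (Fin D) (Fin D) ℤ)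
    (hW : ∀ i, W i = (((List.finRange L).filter fun j => decide (j ≠ i)).map M).prod)
    (Wh Q : Fin L → Matrix (Fin D) (Fin D) ℤ)
    (hBez : ∀ i, W i * Wh i + M i * Q i = 1)
    (r : Fin L → Fin D → ℤ) :
    ∀ i, (∑ j, (W j * Wh j).mulVec (r j)) - r i ∈ lattZ (M i) := by
  intro i
  classical
  have key : ∀ j, ∃ C : Matrix (Fin D) (Fin D) ℤ, j ≠ i → W j = M i * C := by
    intro j
    by_cases hj : j = i
    · exact ⟨0, fun h => absurd hj h⟩
    · set l := ((List.finRange L).filter fun k => decide (k ≠ j)).map M with hl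
      have hmem : M i ∈ l := by
        apply List.mem_map_of_mem
        simp only [List.mem_filter, List.mem_finRange, true_and, decide_eq_true_eq]
        exact fun h => hj h.symm
      have hperm : l.Perm (M i :: l.erase (M i)) := List.perm_cons_erase hmem
      have hpair : l.Pairwise Commute := by
        rw [List.pairwise_iff_forall_sublist]
        intro a b hab
        have ha : a ∈ l := hab.subset (by simp)
        have hb : b ∈ l := hab.subset (by simp)
        obtain ⟨k, _, rfl⟩ := List.mem_map.1 ha
        obtain ⟨k', _, rfl⟩ := List.mem_map.1 hb
        exact hcomm k k'
      refine ⟨(l.erase (M i)).prod, fun _ => ?_⟩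
      rw [hW j, ← hl, hperm.prod_eq' hpair, List.prod_cons]
  choose C hC using key
  refine ⟨(∑ j ∈ Finset.univ.erase i, ((C j) * Wh j).mulVec (r j)) - (Q i).mulVec (r i), ?_⟩
  have hsplit : (∑ j, (W j * Wh j).mulVec (r j))
      = (W i * Wh i).mulVec (r i) + ∑ j ∈ Finset.univ.erase i, (W j * Wh j).mulVec (r j) :=
    (Finset.add_sum_erase _ _ (Finset.mem_univ i)).symm
  have hWi : W i * Wh i = 1 - M i * Q i := eq_sub_of_add_eq (hBez i)
  have hterm : ∀ j ∈ Finset.univ.erase i,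
      (W j * Wh j).mulVec (r j) = (M i).mulVec (((C j) * Wh j).mulVec (r j)) := by
    intro j hjmem
    have hj : j ≠ i := Finset.ne_of_mem_erase hjmem
    rw [hC j hj, Matrix.mulVec_mulVec, mul_assoc]
  rw [hsplit, Finset.sum_congr rfl hterm, hWi]
  have hsum : (M i).mulVec (∑ j ∈ Finset.univ.erase i, ((C j) * Wh j).mulVec (r j))
      = ∑ j ∈ Finset.univ.erase i, (M i).mulVec (((C j) * Wh j).mulVec (r j)) := by
    simp only [← Matrix.mulVecLin_apply]
    exact map_sum _ _ _
  rw [Matrix.sub_mulVec, Matrix.one_mulVec, Matrix.mulVec_sub, hsum, Matrix.mulVec_mulVec]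
  abel
end
end
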